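/- Let X_t be the 8-dimensional nilmanifold family with invariant complex structure given by the (1,0)-form basis η¹_t,...,η⁴_t with dη¹_t = dη²_t = 0, dη³_t = (1/(1-|t|²))(η¹²_t + t η^{2 1̄}_t - i t η^{2 2̄}_t), dη⁴_t = (1/(1-|t|²))(2t̄ η¹²_t + i η^{1 1̄}_t + η^{1 2̄}_t + η^{2 1̄}_t - i t η^{2 2̄}_t), where |t| < 1. At t = 0, every closed invariant (2,0)-form Ω satisfies Ω ∧ Ω = 0; for t ≠ 0, Ω = α η¹²_t + (i/t)θ η¹³_t + τ η²³_t + θ η²⁴_t with θ ≠ 0 is closed and satisfies Ω ∧ Ω ≠ 0. -/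

import Mathlib

/-
STATEMENT 12: For the 8-dimensional nilmanifold family with invariant complex structure
given by (1,0)-forms η¹_t,…,η⁴_t (|t| < 1) with
dη¹ = dη² = 0,
dη³ = (1/(1-|t|²)) (η¹² + t η²∧η̄¹ - i t η²∧η̄²),
dη⁴ = (1/(1-|t|²)) (2 t̄ η¹² + i η¹∧η̄¹ + η¹∧η̄² + η²∧η̄¹ - i t η²∧η̄²):
at t = 0 every closed invariant (2,0)-form Ω satisfies Ω∧Ω = 0; for t ≠ 0 the form
Ω = α η¹² + (i/t)θ η¹³ + τ η²³ + θ η²⁴ with θ ≠ 0 is closed and satisfies Ω∧Ω ≠ 0.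

Model: exterior algebra over ℂ on generators gen 0..3 = η¹..η⁴, gen 4..7 = η̄¹..η̄⁴;
d determined by the structure equations (and conjugates) and the Leibniz rule.
-/

noncomputable section

abbrev E := ExteriorAlgebra ℂ (Fin 8 → ℂ)

def gen (i : Fin 8) : E := ExteriorAlgebra.ι ℂ (Pi.single i 1)

def Kt (t : ℂ) : ℂ := (1 - (Complex.normSq t : ℂ))⁻¹

def dgen (t : ℂ) : Fin 8 → E :=
  ![0, 0,
    (Kt t) • (gen 0 * gen 1) + (Kt t * t) • (gen 1 * gen 4)
      - (Kt t * Complex.I * t) • (gen 1 * gen 5),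
    (2 * Kt t * (starRingEnd ℂ) t) • (gen 0 * gen 1) + (Kt t * Complex.I) • (gen 0 * gen 4)
      + (Kt t) • (gen 0 * gen 5) + (Kt t) • (gen 1 * gen 4)
      - (Kt t * Complex.I * t) • (gen 1 * gen 5),
    0, 0,
    (Kt t) • (gen 4 * gen 5) + (Kt t * (starRingEnd ℂ) t) • (gen 5 * gen 0)
      + (Kt t * Complex.I * (starRingEnd ℂ) t) • (gen 5 * gen 1),
    (2 * Kt t * t) • (gen 4 * gen 5) - (Kt t * Complex.I) • (gen 4 * gen 0)
      + (Kt t) • (gen 4 * gen 1) + (Kt t) • (gen 5 * gen 0)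
      + (Kt t * Complex.I * (starRingEnd ℂ) t) • (gen 5 * gen 1)]

def d2 (t : ℂ) (i j : Fin 8) : E := dgen t i * gen j - gen i * dgen t j

/-- generic invariant (2,0)-form Ω = α η¹² + β η¹³ + γ η¹⁴ + τ η²³ + θ η²⁴ + ζ η³⁴. -/
def Om (a b c d e f : ℂ) : E :=
  a • (gen 0 * gen 1) + b • (gen 0 * gen 2) + c • (gen 0 * gen 3) +
  d • (gen 1 * gen 2) + e • (gen 1 * gen 3) + f • (gen 2 * gen 3)

def dOm (t a b c d e f : ℂ) : E :=
  a • d2 t 0 1 + b • d2 t 0 2 + c • d2 t 0 3 +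
  d • d2 t 1 2 + e • d2 t 1 3 + f • d2 t 2 3

/-!
Expanding `d` as a derivation and sorting monomials gives the normal form
`dΩ = (1 - |t|²)⁻¹ ((iθ - tβ - γ) η¹² ∧ η̄¹ + (itβ + itγ + θ) η¹² ∧ η̄² + ζ d(η³⁴))`,
while `Ω ∧ Ω = 2 (αζ - βθ + γτ) η¹²³⁴` is twice the Pfaffian of the coefficients.
At `t = 0` the coefficients of `η¹² ∧ η̄²`, `η¹² ∧ η̄¹` and `η¹²³` in `dΩ = 0` force
`θ = γ = ζ = 0`, so the Pfaffian vanishes. For `t ≠ 0` the choice `tβ = iθ`, `γ = ζ = 0`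
kills both remaining coefficients, and the Pfaffian is `-2iθ²/t ≠ 0`. Coefficients are read
off with the linear functionals on the exterior algebra given by minors of the coordinate matrix.
-/

namespace ExteriorAlgebra

variable {R M : Type*} [CommRing R] [AddCommGroup M] [Module R M]

theorem ι_mul_ι_swap (x y : M) : ι R x * ι R y = -(ι R y * ι R x) :=
  eq_neg_of_add_eq_zero_left (ι_add_mul_swap x y)

theorem ι_mul_ι_mul_swap (x y : M) (z : ExteriorAlgebra R M) :
    ι R x * (ι R y * z) = -(ι R y * (ι R x * z)) := by
  rw [← mul_assoc, ι_mul_ι_swap, neg_mul, mul_assoc]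

theorem ι_mul_ι_mul_self (x : M) (z : ExteriorAlgebra R M) : ι R x * (ι R x * z) = 0 := by
  rw [← mul_assoc, ι_sq_zero, zero_mul]

variable {ι : Type*}

/-- The coefficient of `e (idx 0) ∧ ⋯ ∧ e (idx (k - 1))`, where `e i = Pi.single i 1`;
it vanishes on the homogeneous components of degree other than `k`. -/
def minorCoeff (k : ℕ) (idx : Fin k → ι) : ExteriorAlgebra R (ι → R) →ₗ[R] R :=
  liftAlternating <| Pi.single (M := fun n => (ι → R) [⋀^Fin n]→ₗ[R] R) k
    (Matrix.detRowAlternating.compLinearMap (LinearMap.funLeft R R idx))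

theorem minorCoeff_ιMulti {k : ℕ} (idx : Fin k → ι) (v : Fin k → ι → R) :
    minorCoeff k idx (ιMulti R k v) = (Matrix.of fun r s => v r (idx s)).det := by
  rw [minorCoeff, liftAlternating_apply_ιMulti, Pi.single_eq_same]
  rfl

theorem minorCoeff_ιMulti_single_self [DecidableEq ι] {k : ℕ} {idx : Fin k → ι}
    (hidx : idx.Injective) :
    minorCoeff k idx (ιMulti R k fun r => Pi.single (idx r) 1) = 1 := by
  rw [minorCoeff_ιMulti, ← Matrix.det_one (n := Fin k) (R := R)]
  congr
  ext r s
  simp [Pi.single_apply, hidx.eq_iff, Matrix.one_apply, eq_comm]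

end ExteriorAlgebra

open ExteriorAlgebra

-- The guards `j < i` turn these into sorting rules, so that `simp` terminates.
theorem gen_mul_gen_of_lt {i j : Fin 8} (_h : j < i) : gen i * gen j = -(gen j * gen i) :=
  ι_mul_ι_swap _ _

theorem gen_mul_gen_mul_of_lt {i j : Fin 8} (_h : j < i) (z : E) :
    gen i * (gen j * z) = -(gen j * (gen i * z)) :=
  ι_mul_ι_mul_swap _ _ _

theorem gen_mul_self (i : Fin 8) : gen i * gen i = 0 := ι_sq_zero _

theorem gen_mul_gen_mul_self (i : Fin 8) (z : E) : gen i * (gen i * z) = 0 :=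
  ι_mul_ι_mul_self _ _

theorem dOm_eq (t α β γ τ θ ζ : ℂ) :
    dOm t α β γ τ θ ζ = Kt t • (
      (Complex.I * θ - t * β - γ) • (gen 0 * (gen 1 * gen 4))
      + (Complex.I * t * (β + γ) + θ) • (gen 0 * (gen 1 * gen 5))
      + ζ • (gen 0 * (gen 1 * gen 3) - (2 * starRingEnd ℂ t) • (gen 0 * (gen 1 * gen 2))
        - t • (gen 1 * (gen 3 * gen 4)) + (Complex.I * t) • (gen 1 * (gen 3 * gen 5))
        + Complex.I • (gen 0 * (gen 2 * gen 4)) + gen 0 * (gen 2 * gen 5)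
        + gen 1 * (gen 2 * gen 4) - (Complex.I * t) • (gen 1 * (gen 2 * gen 5)))) := by
  simp only [dOm, d2, dgen, Matrix.cons_val, mul_add, mul_sub, add_mul, sub_mul,
    mul_smul_comm, smul_mul_assoc, mul_assoc, mul_neg, zero_mul, mul_zero,
    gen_mul_self, gen_mul_gen_mul_self, gen_mul_gen_of_lt, gen_mul_gen_mul_of_lt, Fin.reduceLT]
  match_scalars <;> ring

theorem Om_mul_self (a b c d e f : ℂ) :
    Om a b c d e f * Om a b c d e f =
      (2 * (a * f - b * e + c * d)) • (gen 0 * (gen 1 * (gen 2 * gen 3))) := by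
  simp only [Om, mul_add, add_mul, mul_smul_comm, smul_mul_assoc, mul_assoc, mul_neg, mul_zero,
    gen_mul_self, gen_mul_gen_mul_self, gen_mul_gen_of_lt, gen_mul_gen_mul_of_lt, Fin.reduceLT]
  module

theorem gen_mul_gen_mul_gen (a b c : Fin 8) :
    gen a * (gen b * gen c) = ιMulti ℂ 3 ![Pi.single a 1, Pi.single b 1, Pi.single c 1] := by
  simp [ιMulti_apply, gen]

theorem minorCoeff_gen_mul_gen_mul_gen (idx : Fin 3 → Fin 8) (a b c : Fin 8) :
    minorCoeff 3 idx (gen a * (gen b * gen c)) =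
      (Matrix.of fun r s =>
        (![Pi.single a 1, Pi.single b 1, Pi.single c 1] r : Fin 8 → ℂ) (idx s)).det := by
  rw [gen_mul_gen_mul_gen, minorCoeff_ιMulti]

theorem gen_mul_gen_mul_gen_mul_gen_ne_zero : gen 0 * (gen 1 * (gen 2 * gen 3)) ≠ 0 := by
  have hcoeff : minorCoeff 4 ![0, 1, 2, 3] (gen 0 * (gen 1 * (gen 2 * gen 3))) = (1 : ℂ) := by
    have hmulti : gen 0 * (gen 1 * (gen 2 * gen 3)) =
        ιMulti ℂ 4 fun r => Pi.single (![0, 1, 2, 3] r) 1 := by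
      simp [gen, Matrix.vecTail]
    rw [hmulti]
    exact minorCoeff_ιMulti_single_self (by decide)
  intro h
  rw [h, map_zero] at hcoeff
  exact zero_ne_one hcoeff

theorem Kt_zero : Kt 0 = 1 := by simp [Kt]

theorem eq_zero_of_dOm_zero_eq_zero {α β γ τ θ ζ : ℂ} (h : dOm 0 α β γ τ θ ζ = 0) :
    γ = 0 ∧ θ = 0 ∧ ζ = 0 := by
  rw [dOm_eq, Kt_zero, one_smul] at h
  have hθ : θ = 0 := by
    simpa [minorCoeff_gen_mul_gen_mul_gen, Matrix.det_fin_three, Pi.single_apply]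
      using congrArg (minorCoeff 3 ![0, 1, 5]) h
  have hγ : γ = 0 := by
    simpa [minorCoeff_gen_mul_gen_mul_gen, Matrix.det_fin_three, Pi.single_apply, hθ]
      using congrArg (minorCoeff 3 ![0, 1, 4]) h
  have hζ : ζ = 0 := by
    simpa [minorCoeff_gen_mul_gen_mul_gen, Matrix.det_fin_three, Pi.single_apply]
      using congrArg (minorCoeff 3 ![0, 1, 3]) h
  exact ⟨hγ, hθ, hζ⟩

theorem dOm_eq_zero_of_mul_eq {t α β τ θ : ℂ} (h : t * β = Complex.I * θ) :
    dOm t α β 0 τ θ 0 = 0 := by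
  have h014 : Complex.I * θ - t * β - 0 = 0 := by rw [h]; ring
  have h015 : Complex.I * t * (β + 0) + θ = 0 := by
    linear_combination Complex.I * h + θ * Complex.I_sq
  rw [dOm_eq, h014, h015]
  simp

theorem stmt12_general (t : ℂ) :
    (t = 0 → ∀ α β γ τ θ ζ : ℂ, dOm t α β γ τ θ ζ = 0 →
        Om α β γ τ θ ζ * Om α β γ τ θ ζ = 0) ∧
    (t ≠ 0 → ∀ α τ θ : ℂ, θ ≠ 0 →
        dOm t α (Complex.I / t * θ) 0 τ θ 0 = 0 ∧
        Om α (Complex.I / t * θ) 0 τ θ 0 * Om α (Complex.I / t * θ) 0 τ θ 0 ≠ 0) := by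
  refine ⟨?_, fun ht α τ θ hθ => ⟨dOm_eq_zero_of_mul_eq ?_, ?_⟩⟩
  · rintro rfl α β γ τ θ ζ h
    obtain ⟨rfl, rfl, rfl⟩ := eq_zero_of_dOm_zero_eq_zero h
    simp [Om_mul_self]
  · field_simp
  · rw [Om_mul_self]
    refine smul_ne_zero ?_ gen_mul_gen_mul_gen_mul_gen_ne_zero
    simp [ht, hθ, Complex.I_ne_zero]

theorem stmt12 (t : ℂ) (ht : ‖t‖ < 1) :
    (t = 0 → ∀ α β γ τ θ ζ : ℂ, dOm t α β γ τ θ ζ = 0 →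
        Om α β γ τ θ ζ * Om α β γ τ θ ζ = 0) ∧
    (t ≠ 0 → ∀ α τ θ : ℂ, θ ≠ 0 →
        dOm t α (Complex.I / t * θ) 0 τ θ 0 = 0 ∧
        Om α (Complex.I / t * θ) 0 τ θ 0 * Om α (Complex.I / t * θ) 0 τ θ 0 ≠ 0) :=
  stmt12_general t

end
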